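/- arXiv:2311.11200 — 4 statements merged into one kernel-verified Lean document; each statement's English description precedes it below -/
import Mathlib

section
/- For a real number x_min ≥ 1, lim_{α→∞} ζ(α, x_min) / x_min^{−α} = 1, where ζ(α, x_min) = Σ_{k=0}^∞ (k + x_min)^{−α}. -/
open Filter Real Topology

/-!
Dividing `ζ(α, x)` by its leading term `x ^ (-α)` gives `∑ₖ ((k + x) / x) ^ (-α)`, whose `k = 0`
term is `1` and whose other terms have bases `> 1`, so they vanish as `α → ∞`. The terms decrease
in `α`, so the summable series at `α = 2` dominates them all and the limit passes through the sum.
-/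

theorem tendsto_tsum_rpow_neg_atTop {ι : Type*} {b : ι → ℝ} {i₀ : ι} (h₀ : b i₀ = 1)
    (hb : ∀ i, i ≠ i₀ → 1 < b i) {s : ℝ} (hs : Summable fun i => b i ^ (-s)) :
    Tendsto (fun α : ℝ => ∑' i, b i ^ (-α)) atTop (𝓝 1) := by
  classical
  have hb₁ : ∀ i, 1 ≤ b i := fun i => by
    rcases eq_or_ne i i₀ with rfl | hi
    · exact h₀.ge
    · exact (hb i hi).le
  have hlim : ∀ i, Tendsto (fun α : ℝ => b i ^ (-α)) atTop (𝓝 (if i = i₀ then 1 else 0)) := by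
    intro i
    split_ifs with hi
    · simp [hi, h₀]
    · have hinv₀ : 0 < (b i)⁻¹ := inv_pos.2 (zero_lt_one.trans (hb i hi))
      have hinv₁ : (b i)⁻¹ < 1 := inv_lt_one_of_one_lt₀ (hb i hi)
      refine (tendsto_rpow_atTop_of_base_lt_one _ (by linarith) hinv₁).congr fun α => ?_
      rw [inv_rpow (zero_le_one.trans (hb₁ i)), rpow_neg (zero_le_one.trans (hb₁ i))]
  have hbound : ∀ᶠ α : ℝ in atTop, ∀ i, ‖b i ^ (-α)‖ ≤ b i ^ (-s) := by
    filter_upwards [eventually_ge_atTop s] with α hα i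
    rw [Real.norm_of_nonneg (rpow_nonneg (zero_le_one.trans (hb₁ i)) _)]
    exact rpow_le_rpow_of_exponent_le (hb₁ i) (neg_le_neg hα)
  simpa only [tsum_ite_eq] using tendsto_tsum_of_dominated_convergence hs hlim hbound

theorem summable_nat_add_div_rpow_neg {x s : ℝ} (hx : 0 < x) (hs : 1 < s) :
    Summable fun k : ℕ => (((k : ℝ) + x) / x) ^ (-s) := by
  have h := ((summable_one_div_nat_add_rpow x s).2 hs).div_const (x ^ (-s))
  refine h.congr fun k => ?_
  rw [div_rpow (by positivity) hx.le, abs_of_pos (by positivity), one_div,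
    ← rpow_neg (by positivity)]

/-- For real `x_min ≥ 1`, `lim_{α→∞} ζ(α, x_min) / x_min^{-α} = 1`, where
`ζ(α, x_min) = ∑_{k=0}^∞ (k + x_min)^{-α}`. -/
theorem stmt2 (x_min : ℝ) (hx : 1 ≤ x_min) :
    Filter.Tendsto (fun α : ℝ => (∑' k : ℕ, ((k : ℝ) + x_min) ^ (-α)) / x_min ^ (-α))
      Filter.atTop (nhds 1) := by
  have hx₀ : 0 < x_min := zero_lt_one.trans_le hx
  have hratio : ∀ α : ℝ, (∑' k : ℕ, ((k : ℝ) + x_min) ^ (-α)) / x_min ^ (-α)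
      = ∑' k : ℕ, (((k : ℝ) + x_min) / x_min) ^ (-α) := fun α => by
    rw [← tsum_div_const]
    exact tsum_congr fun k => (div_rpow (by positivity) hx₀.le _).symm
  simp only [hratio]
  refine tendsto_tsum_rpow_neg_atTop (i₀ := 0) (by simp [hx₀.ne']) (fun k hk => ?_)
    (summable_nat_add_div_rpow_neg hx₀ one_lt_two)
  rw [lt_div_iff₀ hx₀]
  have : (0 : ℝ) < k := Nat.cast_pos.2 (Nat.pos_of_ne_zero hk)
  linarith
end

section
/- Define φ''(α, x_min) = ζ''(α, x_min)/ζ(α, x_min) − (ζ'(α, x_min)/ζ(α, x_min))^2, the second derivative of log ζ(α, x_min) in α. Then lim_{α→∞} φ''(α, x_min) · (α−1)^2/α^2 = 0 for fixed x_min ≥ 1. -/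
open Filter Real Topology

section Stmt5Aux

lemma stmt5_summable_dom (x : ℝ) : Summable (fun k : ℕ => x ^ 2 / ((k : ℝ) + 1) ^ 2) := by
  have h : Summable (fun n : ℕ => 1 / ((n : ℝ) + 1) ^ 2) := by
    have := (summable_nat_add_iff (f := fun n : ℕ => 1 / (n : ℝ) ^ 2) 1).2
      (summable_one_div_nat_pow.2 (by norm_num))
    refine this.congr fun n => ?_
    push_cast
    ring_nf
  have := h.mul_left (x ^ 2)
  refine this.congr fun n => ?_
  field_simp

/-- Dominated convergence core: if `0 ≤ c k ≤ w k ^ 2`, `c 0 = 0`, with `w k = (k+x)/x`,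
then `∑' k, c k * (w k) ^ (-α) → 0` as `α → ∞`. -/
lemma stmt5_aux_tendsto {x : ℝ} (hx : 1 ≤ x) (c : ℕ → ℝ) (hc0 : c 0 = 0)
    (hnn : ∀ k, 0 ≤ c k) (hbd : ∀ k, c k ≤ (((k : ℝ) + x) / x) ^ 2) :
    Tendsto (fun α : ℝ => ∑' k : ℕ, c k * (((k : ℝ) + x) / x) ^ (-α))
      atTop (𝓝 0) := by
  have hx0 : (0 : ℝ) < x := lt_of_lt_of_le one_pos hx
  have hw1 : ∀ k : ℕ, (1 : ℝ) ≤ ((k : ℝ) + x) / x := by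
    intro k
    rw [le_div_iff₀ hx0]
    have : (0:ℝ) ≤ (k : ℝ) := Nat.cast_nonneg k
    linarith
  have hzero : (0 : ℝ) = ∑' _ : ℕ, (0 : ℝ) := by simp
  rw [hzero]
  apply tendsto_tsum_of_dominated_convergence (bound := fun k : ℕ => x ^ 2 / ((k : ℝ) + 1) ^ 2)
    (stmt5_summable_dom x)
  · intro k
    rcases Nat.eq_zero_or_pos k with rfl | hk
    · simpa [hc0] using (tendsto_const_nhds : Tendsto (fun _ : ℝ => (0:ℝ)) atTop (𝓝 0))
    · have hw : 1 < ((k : ℝ) + x) / x := by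
        rw [lt_div_iff₀ hx0]
        have : (1 : ℝ) ≤ (k : ℝ) := by exact_mod_cast hk
        linarith
      have hwpos : (0:ℝ) < ((k : ℝ) + x) / x := lt_trans one_pos hw
      have h1 : Tendsto (fun α : ℝ => ((((k : ℝ) + x) / x)⁻¹) ^ α) atTop (𝓝 0) := by
        apply tendsto_rpow_atTop_of_base_lt_one
        · have : (0:ℝ) < (((k : ℝ) + x) / x)⁻¹ := inv_pos.2 hwpos
          linarith
        · exact inv_lt_one_of_one_lt₀ hw
      have h2 : (fun α : ℝ => ((((k : ℝ) + x) / x)⁻¹) ^ α)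
          = fun α : ℝ => (((k : ℝ) + x) / x) ^ (-α) := by
        funext α
        rw [Real.inv_rpow hwpos.le, ← Real.rpow_neg hwpos.le]
      rw [h2] at h1
      simpa using h1.const_mul (c k)
  · filter_upwards [eventually_ge_atTop (4 : ℝ)] with α hα k
    have hwk := hw1 k
    have hwpos : (0:ℝ) < ((k : ℝ) + x) / x := lt_of_lt_of_le one_pos hwk
    have hrw : (((k : ℝ) + x) / x) ^ (-α) ≤ (((k : ℝ) + x) / x) ^ (-(4:ℝ)) :=
      Real.rpow_le_rpow_of_exponent_le hwk (by linarith)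
    have hnn' : (0:ℝ) ≤ c k * (((k : ℝ) + x) / x) ^ (-α) :=
      mul_nonneg (hnn k) (Real.rpow_pos_of_pos hwpos _).le
    rw [Real.norm_eq_abs, abs_of_nonneg hnn']
    have step1 : c k * (((k : ℝ) + x) / x) ^ (-α)
        ≤ (((k : ℝ) + x) / x) ^ 2 * (((k : ℝ) + x) / x) ^ (-(4:ℝ)) := by
      apply mul_le_mul (hbd k) hrw (Real.rpow_pos_of_pos hwpos _).le
      positivity
    have step2 : (((k : ℝ) + x) / x) ^ 2 * (((k : ℝ) + x) / x) ^ (-(4:ℝ))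
        = (((k : ℝ) + x) / x) ^ (-(2:ℝ)) := by
      rw [← Real.rpow_natCast (((k : ℝ) + x) / x) 2, ← Real.rpow_add hwpos]
      norm_num
    have step3 : (((k : ℝ) + x) / x) ^ (-(2:ℝ)) ≤ x ^ 2 / ((k : ℝ) + 1) ^ 2 := by
      have hk1 : (0:ℝ) < (k : ℝ) + 1 := by positivity
      have hge : ((k : ℝ) + 1) / x ≤ ((k : ℝ) + x) / x := by
        gcongr <;> linarith
      have hgp : (0:ℝ) < ((k : ℝ) + 1) / x := by positivity
      have hconv : (((k : ℝ) + x) / x) ^ (-(2:ℝ)) = ((((k : ℝ) + x) / x) ^ 2)⁻¹ := by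
        rw [Real.rpow_neg hwpos.le, ← Real.rpow_natCast (((k : ℝ) + x) / x) 2]
        norm_num
      rw [hconv]
      have h2 : (((k : ℝ) + 1) / x) ^ 2 ≤ (((k : ℝ) + x) / x) ^ 2 :=
        pow_le_pow_left₀ hgp.le hge 2
      calc ((((k : ℝ) + x) / x) ^ 2)⁻¹ ≤ ((((k : ℝ) + 1) / x) ^ 2)⁻¹ := by
            apply inv_anti₀ (by positivity) h2
        _ = x ^ 2 / ((k : ℝ) + 1) ^ 2 := by
            rw [div_pow, inv_div]
    calc c k * (((k : ℝ) + x) / x) ^ (-α)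
        ≤ (((k : ℝ) + x) / x) ^ 2 * (((k : ℝ) + x) / x) ^ (-(4:ℝ)) := step1
      _ = (((k : ℝ) + x) / x) ^ (-(2:ℝ)) := step2
      _ ≤ x ^ 2 / ((k : ℝ) + 1) ^ 2 := step3

end Stmt5Aux

/-- With `φ''(α, x_min) = ζ''(α,x_min)/ζ(α,x_min) - (ζ'(α,x_min)/ζ(α,x_min))^2`
(the second derivative of `log ζ(α, x_min)` in `α`, given by the termwise-differentiated
series), one has `lim_{α→∞} φ''(α, x_min) (α-1)^2/α^2 = 0` for fixed real `x_min ≥ 1`. -/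
theorem stmt5 (x_min : ℝ) (hx : 1 ≤ x_min) :
    Filter.Tendsto
      (fun α : ℝ =>
        ((∑' k : ℕ, (Real.log ((k : ℝ) + x_min)) ^ 2 * ((k : ℝ) + x_min) ^ (-α))
            / (∑' k : ℕ, ((k : ℝ) + x_min) ^ (-α))
          - ((-∑' k : ℕ, Real.log ((k : ℝ) + x_min) * ((k : ℝ) + x_min) ^ (-α))
              / (∑' k : ℕ, ((k : ℝ) + x_min) ^ (-α))) ^ 2)
          * (α - 1) ^ 2 / α ^ 2)
      Filter.atTop (nhds 0) := by
  have hx0 : (0:ℝ) < x_min := lt_of_lt_of_le one_pos hx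
  set cc : ℝ := Real.log x_min with hccdef
  have hw1 : ∀ k : ℕ, (1:ℝ) ≤ ((k:ℝ) + x_min) / x_min := by
    intro k
    rw [le_div_iff₀ hx0]
    have : (0:ℝ) ≤ (k:ℝ) := Nat.cast_nonneg k
    linarith
  have hwabs : ∀ k : ℕ, |Real.log (((k:ℝ) + x_min) / x_min)|
      ≤ ((k:ℝ) + x_min) / x_min := by
    intro k
    rw [abs_of_nonneg (Real.log_nonneg (hw1 k))]
    have h := Real.log_le_sub_one_of_pos (lt_of_lt_of_le one_pos (hw1 k))
    linarith
  have hG1 : Tendsto (fun α : ℝ => ∑' k : ℕ,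
      |Real.log (((k:ℝ) + x_min) / x_min)| * (((k:ℝ) + x_min) / x_min) ^ (-α))
      atTop (𝓝 0) := by
    apply stmt5_aux_tendsto hx
    · simp [div_self hx0.ne']
    · intro k; exact abs_nonneg _
    · intro k
      have h1 := hwabs k
      have h2 := hw1 k
      nlinarith
  have hG2 : Tendsto (fun α : ℝ => ∑' k : ℕ,
      (Real.log (((k:ℝ) + x_min) / x_min)) ^ 2 * (((k:ℝ) + x_min) / x_min) ^ (-α))
      atTop (𝓝 0) := by
    apply stmt5_aux_tendsto hx
    · simp [div_self hx0.ne']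
    · intro k; exact sq_nonneg _
    · intro k
      rw [← sq_abs]
      exact pow_le_pow_left₀ (abs_nonneg _) (hwabs k) 2
  have hlim : Tendsto (fun α : ℝ =>
      (∑' k : ℕ, (Real.log (((k:ℝ) + x_min) / x_min)) ^ 2
          * (((k:ℝ) + x_min) / x_min) ^ (-α))
        + (∑' k : ℕ, |Real.log (((k:ℝ) + x_min) / x_min)|
          * (((k:ℝ) + x_min) / x_min) ^ (-α)) ^ 2) atTop (𝓝 0) := by
    have := hG2.add (hG1.pow 2)
    simpa using this
  apply squeeze_zero_norm' _ hlim
  filter_upwards [eventually_ge_atTop (4:ℝ)] with α hα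
  have hkpos : ∀ k : ℕ, (0:ℝ) < (k:ℝ) + x_min := by
    intro k
    have : (0:ℝ) ≤ (k:ℝ) := Nat.cast_nonneg k
    linarith
  have hk1 : ∀ k : ℕ, (1:ℝ) ≤ (k:ℝ) + x_min := by
    intro k
    have : (0:ℝ) ≤ (k:ℝ) := Nat.cast_nonneg k
    linarith
  have hwnn : ∀ k : ℕ, (0:ℝ) < ((k:ℝ) + x_min) ^ (-α) :=
    fun k => Real.rpow_pos_of_pos (hkpos k) _
  have hlognn : ∀ k : ℕ, 0 ≤ Real.log ((k:ℝ) + x_min) :=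
    fun k => Real.log_nonneg (hk1 k)
  have hlogle : ∀ k : ℕ, Real.log ((k:ℝ) + x_min) ≤ (k:ℝ) + x_min := by
    intro k
    have := Real.log_le_sub_one_of_pos (hkpos k)
    linarith
  -- master summability
  have hmaster : Summable (fun k : ℕ => ((k:ℝ) + x_min) ^ ((2:ℝ) - α)) := by
    apply (stmt5_summable_dom x_min).of_nonneg_of_le
      (fun k => (Real.rpow_pos_of_pos (hkpos k) _).le)
    intro k
    have hk1' : (0:ℝ) < (k:ℝ) + 1 := by positivity
    calc ((k:ℝ) + x_min) ^ ((2:ℝ) - α)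
        ≤ ((k:ℝ) + x_min) ^ (-(2:ℝ)) :=
          Real.rpow_le_rpow_of_exponent_le (hk1 k) (by linarith)
      _ = (((k:ℝ) + x_min) ^ 2)⁻¹ := by
          rw [Real.rpow_neg (hkpos k).le, ← Real.rpow_natCast ((k:ℝ) + x_min) 2]
          norm_num
      _ ≤ (((k:ℝ) + 1) ^ 2)⁻¹ := by
          apply inv_anti₀ (by positivity)
          have : (k:ℝ) + 1 ≤ (k:ℝ) + x_min := by linarith
          exact pow_le_pow_left₀ hk1'.le this 2
      _ ≤ x_min ^ 2 / ((k:ℝ) + 1) ^ 2 := by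
          rw [inv_eq_one_div]
          gcongr
          nlinarith
  have hsplit1 : ∀ k : ℕ, ((k:ℝ) + x_min) * ((k:ℝ) + x_min) ^ (-α)
      = ((k:ℝ) + x_min) ^ ((1:ℝ) - α) := by
    intro k
    rw [show (1:ℝ) - α = 1 + (-α) by ring, Real.rpow_add (hkpos k), Real.rpow_one]
  have hsplit2 : ∀ k : ℕ, ((k:ℝ) + x_min) ^ 2 * ((k:ℝ) + x_min) ^ (-α)
      = ((k:ℝ) + x_min) ^ ((2:ℝ) - α) := by
    intro k
    rw [show (2:ℝ) - α = (2:ℕ) + (-α) by push_cast; ring, Real.rpow_add (hkpos k),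
      Real.rpow_natCast]
  have hA : Summable (fun k : ℕ => ((k:ℝ) + x_min) ^ (-α)) := by
    apply hmaster.of_nonneg_of_le (fun k => (hwnn k).le)
    intro k
    exact Real.rpow_le_rpow_of_exponent_le (hk1 k) (by linarith)
  have hB : Summable (fun k : ℕ => Real.log ((k:ℝ) + x_min) * ((k:ℝ) + x_min) ^ (-α)) := by
    apply hmaster.of_nonneg_of_le
      (fun k => mul_nonneg (hlognn k) (hwnn k).le)
    intro k
    calc Real.log ((k:ℝ) + x_min) * ((k:ℝ) + x_min) ^ (-α)
        ≤ ((k:ℝ) + x_min) * ((k:ℝ) + x_min) ^ (-α) :=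
          mul_le_mul_of_nonneg_right (hlogle k) (hwnn k).le
      _ = ((k:ℝ) + x_min) ^ ((1:ℝ) - α) := hsplit1 k
      _ ≤ ((k:ℝ) + x_min) ^ ((2:ℝ) - α) :=
          Real.rpow_le_rpow_of_exponent_le (hk1 k) (by linarith)
  have hC : Summable (fun k : ℕ =>
      (Real.log ((k:ℝ) + x_min)) ^ 2 * ((k:ℝ) + x_min) ^ (-α)) := by
    apply hmaster.of_nonneg_of_le
      (fun k => mul_nonneg (sq_nonneg _) (hwnn k).le)
    intro k
    calc (Real.log ((k:ℝ) + x_min)) ^ 2 * ((k:ℝ) + x_min) ^ (-α)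
        ≤ ((k:ℝ) + x_min) ^ 2 * ((k:ℝ) + x_min) ^ (-α) := by
          apply mul_le_mul_of_nonneg_right _ (hwnn k).le
          exact pow_le_pow_left₀ (hlognn k) (hlogle k) 2
      _ = ((k:ℝ) + x_min) ^ ((2:ℝ) - α) := hsplit2 k
  set A0 := ∑' k : ℕ, ((k:ℝ) + x_min) ^ (-α) with hA0def
  set B1 := ∑' k : ℕ, Real.log ((k:ℝ) + x_min) * ((k:ℝ) + x_min) ^ (-α) with hB1def
  set C2 := ∑' k : ℕ, (Real.log ((k:ℝ) + x_min)) ^ 2 * ((k:ℝ) + x_min) ^ (-α) with hC2def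
  have hApos : 0 < A0 := Summable.tsum_pos hA (fun k => (hwnn k).le) 0 (hwnn 0)
  have hcle : ∀ k : ℕ, cc ≤ Real.log ((k:ℝ) + x_min) := by
    intro k
    apply Real.log_le_log hx0
    have : (0:ℝ) ≤ (k:ℝ) := Nat.cast_nonneg k
    linarith
  -- centered sums
  have e1 : (fun k : ℕ => (Real.log ((k:ℝ) + x_min) - cc) ^ 2 * ((k:ℝ) + x_min) ^ (-α))
      = fun k : ℕ => ((Real.log ((k:ℝ) + x_min)) ^ 2 * ((k:ℝ) + x_min) ^ (-α)
          - (2 * cc) * (Real.log ((k:ℝ) + x_min) * ((k:ℝ) + x_min) ^ (-α)))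
        + cc ^ 2 * ((k:ℝ) + x_min) ^ (-α) := by
    funext k; ring
  have e2 : (fun k : ℕ => (Real.log ((k:ℝ) + x_min) - cc) * ((k:ℝ) + x_min) ^ (-α))
      = fun k : ℕ => Real.log ((k:ℝ) + x_min) * ((k:ℝ) + x_min) ^ (-α)
        - cc * ((k:ℝ) + x_min) ^ (-α) := by
    funext k; ring
  have hUsum : Summable (fun k : ℕ =>
      (Real.log ((k:ℝ) + x_min) - cc) ^ 2 * ((k:ℝ) + x_min) ^ (-α)) := by
    rw [e1]; exact (hC.sub (hB.mul_left (2 * cc))).add (hA.mul_left (cc ^ 2))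
  have hWsum : Summable (fun k : ℕ =>
      (Real.log ((k:ℝ) + x_min) - cc) * ((k:ℝ) + x_min) ^ (-α)) := by
    rw [e2]; exact hB.sub (hA.mul_left cc)
  set U := ∑' k : ℕ, (Real.log ((k:ℝ) + x_min) - cc) ^ 2 * ((k:ℝ) + x_min) ^ (-α) with hUdef
  set W := ∑' k : ℕ, (Real.log ((k:ℝ) + x_min) - cc) * ((k:ℝ) + x_min) ^ (-α) with hWdef
  have hUeq : U = (C2 - 2 * cc * B1) + cc ^ 2 * A0 := by
    rw [hUdef, e1, Summable.tsum_add (hC.sub (hB.mul_left (2 * cc))) (hA.mul_left (cc ^ 2)),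
      Summable.tsum_sub hC (hB.mul_left (2 * cc)), tsum_mul_left, tsum_mul_left]
  have hWeq : W = B1 - cc * A0 := by
    rw [hWdef, e2, Summable.tsum_sub hB (hA.mul_left cc), tsum_mul_left]
  have hUnn : 0 ≤ U :=
    tsum_nonneg fun k => mul_nonneg (sq_nonneg _) (hwnn k).le
  have hWnn : 0 ≤ W :=
    tsum_nonneg fun k => mul_nonneg (sub_nonneg.2 (hcle k)) (hwnn k).le
  have hAx : x_min ^ (-α) ≤ A0 := by
    have := Summable.le_tsum hA 0 (fun j _ => (hwnn j).le)
    simpa using this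
  have hxa : (0:ℝ) < x_min ^ (-α) := Real.rpow_pos_of_pos hx0 _
  have hdivmul : ∀ t : ℝ, t / x_min ^ (-α) = t * x_min ^ α := by
    intro t
    rw [Real.rpow_neg hx0.le, div_inv_eq_mul]
  have hterm : ∀ k : ℕ, (((k:ℝ) + x_min) / x_min) ^ (-α)
      = ((k:ℝ) + x_min) ^ (-α) * x_min ^ α := by
    intro k
    rw [Real.div_rpow (hkpos k).le hx0.le, hdivmul]
  have hlogdiv : ∀ k : ℕ, Real.log (((k:ℝ) + x_min) / x_min)
      = Real.log ((k:ℝ) + x_min) - cc :=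
    fun k => Real.log_div (hkpos k).ne' hx0.ne'
  have hUb : U / A0 ≤ ∑' k : ℕ,
      (Real.log (((k:ℝ) + x_min) / x_min)) ^ 2 * (((k:ℝ) + x_min) / x_min) ^ (-α) := by
    calc U / A0 ≤ U / x_min ^ (-α) := div_le_div_of_nonneg_left hUnn hxa hAx
      _ = U * x_min ^ α := hdivmul U
      _ = ∑' k : ℕ, (Real.log ((k:ℝ) + x_min) - cc) ^ 2
            * ((k:ℝ) + x_min) ^ (-α) * x_min ^ α := (tsum_mul_right).symm
      _ = _ := by
          apply tsum_congr
          intro k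
          rw [hlogdiv k, hterm k]
          ring
  have hWb : W / A0 ≤ ∑' k : ℕ,
      |Real.log (((k:ℝ) + x_min) / x_min)| * (((k:ℝ) + x_min) / x_min) ^ (-α) := by
    calc W / A0 ≤ W / x_min ^ (-α) := div_le_div_of_nonneg_left hWnn hxa hAx
      _ = W * x_min ^ α := hdivmul W
      _ = ∑' k : ℕ, (Real.log ((k:ℝ) + x_min) - cc)
            * ((k:ℝ) + x_min) ^ (-α) * x_min ^ α := (tsum_mul_right).symm
      _ = _ := by
          apply tsum_congr
          intro k
          rw [hlogdiv k, hterm k, abs_of_nonneg (sub_nonneg.2 (hcle k))]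
          ring
  have hWAnn : 0 ≤ W / A0 := div_nonneg hWnn hApos.le
  have key : C2 / A0 - (-B1 / A0) ^ 2 = U / A0 - (W / A0) ^ 2 := by
    rw [hUeq, hWeq]
    field_simp
    ring
  rw [key]
  have hq0 : (0:ℝ) ≤ (α - 1) ^ 2 / α ^ 2 := by positivity
  have hq1 : (α - 1) ^ 2 / α ^ 2 ≤ 1 := by
    rw [div_le_one (by positivity : (0:ℝ) < α ^ 2)]
    nlinarith
  have htri : |U / A0 - (W / A0) ^ 2| ≤ U / A0 + (W / A0) ^ 2 := by
    have h := abs_sub (U / A0) ((W / A0) ^ 2)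
    calc |U / A0 - (W / A0) ^ 2| ≤ |U / A0| + |(W / A0) ^ 2| := abs_sub _ _
      _ = U / A0 + (W / A0) ^ 2 := by
          rw [abs_of_nonneg (div_nonneg hUnn hApos.le), abs_of_nonneg (sq_nonneg _)]
  calc ‖(U / A0 - (W / A0) ^ 2) * (α - 1) ^ 2 / α ^ 2‖
      = |U / A0 - (W / A0) ^ 2| * ((α - 1) ^ 2 / α ^ 2) := by
        rw [Real.norm_eq_abs, mul_div_assoc, abs_mul, abs_of_nonneg hq0]
    _ ≤ |U / A0 - (W / A0) ^ 2| * 1 :=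
        mul_le_mul_of_nonneg_left hq1 (abs_nonneg _)
    _ = |U / A0 - (W / A0) ^ 2| := mul_one _
    _ ≤ U / A0 + (W / A0) ^ 2 := htri
    _ ≤ (∑' k : ℕ, (Real.log (((k:ℝ) + x_min) / x_min)) ^ 2
            * (((k:ℝ) + x_min) / x_min) ^ (-α))
        + (∑' k : ℕ, |Real.log (((k:ℝ) + x_min) / x_min)|
            * (((k:ℝ) + x_min) / x_min) ^ (-α)) ^ 2 :=
        add_le_add hUb (pow_le_pow_left₀ hWAnn hWb 2)
end

section
/- Fix integer x_min ≥ 1 and data x_1,…,x_n with each x_i ≥ x_min an integer and at least one x_i > x_min. Then for every r ≥ 0, the integral ∫_1^∞ α^r (α−1)^{−1} ζ(α, x_min)^{−n} Π_{i=1}^n x_i^{−α} dα is finite. -/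
/-!
The integrand is dominated on all of `(1, ∞)` by `α ^ r * exp (-b * α)` with
`b = ∑ i, log (x i / x_min) > 0`. Comparing the series with `∫_{x_min}^∞ t^(-α) dt` gives
`(α - 1) ζ(α, x_min) ≥ x_min^(1-α) ≥ x_min^(-α)`, which absorbs the pole of `(α - 1)⁻¹` into one
of the `n ≥ 1` factors `ζ(α, x_min)⁻¹`; the others are bounded through the first term of the
series, `ζ(α, x_min) ≥ x_min^(-α)`, and what remains is `∏ i, (x i / x_min)^(-α) = exp (-b * α)`.
-/

open Set MeasureTheory Real

noncomputable def natHurwitzZeta (m : ℕ) (α : ℝ) : ℝ :=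
  ∑' k : ℕ, ((k + m : ℕ) : ℝ) ^ (-α)

namespace natHurwitzZeta

lemma summable (m : ℕ) {α : ℝ} (hα : 1 < α) :
    Summable fun k : ℕ => ((k + m : ℕ) : ℝ) ^ (-α) :=
  (summable_nat_add_iff m).2 (summable_nat_rpow.2 (by linarith))

lemma measurable (m : ℕ) : Measurable (natHurwitzZeta m) :=
  Measurable.tsum fun _ => by fun_prop

lemma nonneg (m : ℕ) (α : ℝ) : 0 ≤ natHurwitzZeta m α :=
  tsum_nonneg fun _ => by positivity

lemma rpow_neg_le (m : ℕ) {α : ℝ} (hα : 1 < α) : (m : ℝ) ^ (-α) ≤ natHurwitzZeta m α := by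
  unfold natHurwitzZeta
  simpa using (summable m hα).le_tsum 0 fun k _ => by positivity

lemma rpow_one_sub_le_mul {m : ℕ} (hm : 0 < m) {α : ℝ} (hα : 1 < α) :
    (m : ℝ) ^ (1 - α) ≤ (α - 1) * natHurwitzZeta m α := by
  have hm' : (0 : ℝ) < m := by exact_mod_cast hm
  have hint : ∫ t in Ioi (m : ℝ), t ^ (-α) ≤ natHurwitzZeta m α :=
    AntitoneOn.integral_le_tsum_comp_add m
      ((antitoneOn_rpow_Ioi_of_exponent_nonpos (by linarith)).mono fun t ht => hm'.trans_le ht)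
      ((summable_nat_add_iff m).1 (summable m hα)) fun t ht => rpow_nonneg (hm'.trans ht).le _
  rwa [integral_Ioi_rpow_of_lt (by linarith) hm', neg_add_eq_sub, neg_div, ← div_neg, neg_sub,
    div_le_iff₀' (by linarith)] at hint

lemma rpow_neg_pow_le_mul_pow {m : ℕ} (hm : 1 ≤ m) {α : ℝ} (hα : 1 < α) {n : ℕ} (hn : n ≠ 0) :
    ((m : ℝ) ^ (-α)) ^ n ≤ (α - 1) * natHurwitzZeta m α ^ n := by
  obtain ⟨n, rfl⟩ := Nat.exists_eq_succ_of_ne_zero hn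
  have hm' : (1 : ℝ) ≤ m := by exact_mod_cast hm
  have hpole : (m : ℝ) ^ (-α) ≤ (α - 1) * natHurwitzZeta m α :=
    (rpow_le_rpow_of_exponent_le hm' (by linarith)).trans (rpow_one_sub_le_mul hm hα)
  calc ((m : ℝ) ^ (-α)) ^ (n + 1) = ((m : ℝ) ^ (-α)) ^ n * (m : ℝ) ^ (-α) := pow_succ _ _
    _ ≤ natHurwitzZeta m α ^ n * ((α - 1) * natHurwitzZeta m α) := by
        have hζ := nonneg m α
        gcongr
        exact rpow_neg_le m hα
    _ = (α - 1) * natHurwitzZeta m α ^ (n + 1) := by ring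

end natHurwitzZeta

lemma prod_rpow_neg_eq_mul_exp {ι : Type*} [Fintype ι] {y : ι → ℝ} (hy : ∀ i, 0 < y i)
    {m : ℝ} (hm : 0 < m) (α : ℝ) :
    ∏ i, y i ^ (-α) = (m ^ (-α)) ^ Fintype.card ι * exp (-((∑ i, log (y i / m)) * α)) := by
  have hterm : ∀ i, y i ^ (-α) = m ^ (-α) * exp (-(log (y i / m) * α)) := fun i => by
    rw [← mul_neg, mul_comm, ← rpow_def_of_pos (div_pos (hy i) hm), ← mul_rpow
      (div_pos (hy i) hm).le hm.le, div_mul_cancel₀ _ hm.ne']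
  rw [Finset.prod_congr rfl fun i _ => hterm i, Finset.prod_mul_distrib, Finset.prod_const,
    Finset.card_univ, Finset.sum_mul, ← Finset.sum_neg_distrib, exp_sum]

lemma integrableOn_Ioi_rpow_mul_exp_neg_mul {r b : ℝ} (hr : -1 < r) (hb : 0 < b) :
    IntegrableOn (fun α : ℝ => α ^ r * exp (-(b * α))) (Ioi 0) := by
  refine (integrableOn_rpow_mul_exp_neg_mul_rpow hr one_pos hb).congr_fun (fun α _ => ?_)
    measurableSet_Ioi
  simp [neg_mul]

lemma norm_posterior_le {ι : Type*} [Fintype ι] [Nonempty ι] {m : ℕ} (hm : 1 ≤ m) {y : ι → ℝ}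
    (hy : ∀ i, 0 < y i) (r : ℝ) {α : ℝ} (hα : 1 < α) :
    ‖α ^ r * (α - 1)⁻¹ * (natHurwitzZeta m α ^ Fintype.card ι)⁻¹ * ∏ i, y i ^ (-α)‖ ≤
      α ^ r * exp (-((∑ i, log (y i / m)) * α)) := by
  have hm' : (0 : ℝ) < m := by exact_mod_cast hm
  have hpole := natHurwitzZeta.rpow_neg_pow_le_mul_pow hm hα (Fintype.card_pos (α := ι)).ne'
  have hα' : 0 < α - 1 := by linarith
  have hζ := natHurwitzZeta.nonneg m α
  have hαr : 0 ≤ α ^ r := rpow_nonneg (by linarith) r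
  have hprod : 0 ≤ ∏ i, y i ^ (-α) := Finset.prod_nonneg fun i _ => rpow_nonneg (hy i).le _
  rw [norm_of_nonneg (by positivity), prod_rpow_neg_eq_mul_exp hy hm', mul_assoc _ (α - 1)⁻¹,
    ← mul_inv]
  calc α ^ r * ((α - 1) * natHurwitzZeta m α ^ Fintype.card ι)⁻¹ *
        ((m ^ (-α)) ^ Fintype.card ι * exp (-((∑ i, log (y i / m)) * α)))
      ≤ α ^ r * (((m : ℝ) ^ (-α)) ^ Fintype.card ι)⁻¹ *
        ((m ^ (-α)) ^ Fintype.card ι * exp (-((∑ i, log (y i / m)) * α))) := by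
        gcongr
    _ = α ^ r * exp (-((∑ i, log (y i / m)) * α)) := by
        field_simp

/-- For fixed integer `x_min ≥ 1` and integer data `x_1,…,x_n` with each `x_i ≥ x_min` and at
least one `x_i > x_min`, for every `r ≥ 0` the integral
`∫_1^∞ α^r (α-1)^{-1} ζ(α,x_min)^{-n} ∏ x_i^{-α} dα` is finite (the nonnegative integrand is
integrable on `(1, ∞)`), where `ζ(α, x_min) = ∑_{k=0}^∞ (k + x_min)^{-α}`. -/
theorem stmt6 (x_min : ℕ) (hxm : 1 ≤ x_min) (n : ℕ) (x : Fin n → ℕ)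
    (hx : ∀ i, x_min ≤ x i) (hx' : ∃ i, x_min < x i) (r : ℝ) (hr : 0 ≤ r) :
    MeasureTheory.IntegrableOn
      (fun α : ℝ => α ^ r * (α - 1)⁻¹
        * ((∑' k : ℕ, ((k + x_min : ℕ) : ℝ) ^ (-α)) ^ n)⁻¹ * ∏ i, (x i : ℝ) ^ (-α))
      (Set.Ioi 1) := by
  obtain ⟨i₀, hi₀⟩ := hx'
  have : Nonempty (Fin n) := ⟨i₀⟩
  have hm : (0 : ℝ) < x_min := by exact_mod_cast hxm
  have hb : 0 < ∑ i, log ((x i : ℝ) / x_min) :=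
    Finset.sum_pos' (fun i _ => log_nonneg ((one_le_div hm).2 (by exact_mod_cast hx i)))
      ⟨i₀, Finset.mem_univ _, log_pos ((one_lt_div hm).2 (by exact_mod_cast hi₀))⟩
  refine ((integrableOn_Ioi_rpow_mul_exp_neg_mul (neg_one_lt_zero.trans_le hr) hb).mono_set
    (Ioi_subset_Ioi zero_le_one)).mono' ?_ ?_
  · have := natHurwitzZeta.measurable x_min
    exact Measurable.aestronglyMeasurable (by unfold natHurwitzZeta at this; fun_prop)
  · filter_upwards [self_mem_ae_restrict measurableSet_Ioi] with α hα
    have := norm_posterior_le hxm (y := fun i => (x i : ℝ))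
      (fun i => hm.trans_le (by exact_mod_cast hx i)) r hα
    rwa [Fintype.card_fin] at this
end

section
/- Fix integer x_min ≥ 1 and integer data x_1,…,x_n with each x_i ≥ x_min and at least one x_i > x_min. Then for every r ≥ 0, the integral ∫_1^∞ α^r √(φ''(α, x_min)) ζ(α, x_min)^{−n} Π_{i=1}^n x_i^{−α} dα is finite, where φ''(α, x_min) = ζ''(α, x_min)/ζ(α, x_min) − (ζ'(α, x_min)/ζ(α, x_min))^2. -/
/-!
Write `N = x_min` and `Zⱼ(α) = ∑ₖ (log (k + N))ʲ (k + N)^(-α)`, so that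
`φ'' = Z₂/Z₀ - (Z₁/Z₀)² ≤ Z₂/Z₀`.

On `(1, 2]`, the integral test gives `Z₀(α) ≥ 1/(N(α - 1))`, and `log m ≤ m^ε/ε` reduces `Z₂(α)`
to `Z₀((α + 1)/2) = O((α - 1)⁻¹)`, so `Z₂(α) = O((α - 1)⁻³)`. Hence `√φ'' = O((α - 1)⁻¹)`, which
the factor `Z₀^(-n) = O((α - 1)ⁿ)` compensates as soon as `n ≥ 1`: the integrand is bounded there.

On `[2, ∞)`, the first term gives `Z₀(α) ≥ N^(-α)`, and
`N^α Z₂(α) = ∑ₖ (log (k + N))² (N/(k + N))^α` decreases in `α`, so `φ''` stays bounded, while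
`Z₀^(-n) ∏ xᵢ^(-α) ≤ ∏ (N/xᵢ)^α ≤ (N/x_{i₀})^α` decays exponentially because some `x_{i₀} > N`.
-/

open MeasureTheory Set Filter

lemma log_pow_mul_rpow_neg_le {m ε : ℝ} (hm : 1 ≤ m) (hε : 0 < ε) (j : ℕ) (α : ℝ) :
    Real.log m ^ j * m ^ (-α) ≤ m ^ (-(α - j * ε)) / ε ^ j := by
  have hm0 : 0 < m := by linarith
  have hlog : Real.log m ^ j ≤ m ^ (j * ε) / ε ^ j := by
    calc Real.log m ^ j ≤ (m ^ ε / ε) ^ j :=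
          pow_le_pow_left₀ (Real.log_nonneg hm) (Real.log_le_rpow_div hm0.le hε) j
      _ = m ^ (j * ε) / ε ^ j := by rw [div_pow, ← Real.rpow_mul_natCast hm0.le, mul_comm]
  calc Real.log m ^ j * m ^ (-α) ≤ m ^ (j * ε) / ε ^ j * m ^ (-α) :=
        mul_le_mul_of_nonneg_right hlog (by positivity)
    _ = m ^ (-(α - j * ε)) / ε ^ j := by
        rw [div_mul_eq_mul_div, ← Real.rpow_add hm0]
        ring_nf

lemma integral_Ioi_rpow_neg {c β : ℝ} (hc : 0 < c) (hβ : 1 < β) :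
    ∫ t in Ioi c, t ^ (-β) = c ^ (1 - β) / (β - 1) := by
  rw [integral_Ioi_rpow_of_lt (by linarith) hc, neg_div, ← div_neg]
  ring_nf

lemma antitoneOn_rpow_neg_Ici {c β : ℝ} (hc : 0 < c) (hβ : 0 ≤ β) :
    AntitoneOn (fun t : ℝ => t ^ (-β)) (Ici c) :=
  (Real.antitoneOn_rpow_Ioi_of_exponent_nonpos (by linarith)).mono (Ici_subset_Ioi.2 hc)

lemma rpow_mul_rpow_neg {a b : ℝ} (ha : 0 ≤ a) (hb : 0 ≤ b) (γ : ℝ) :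
    a ^ γ * b ^ (-γ) = (a / b) ^ γ := by
  rw [Real.div_rpow ha hb, Real.rpow_neg hb, div_eq_mul_inv]

lemma pow_rpow_mul_prod_rpow_neg_le {n : ℕ} {c α : ℝ} {y : Fin n → ℝ} (hc : 0 < c)
    (hy : ∀ i, c ≤ y i) (hα : 0 ≤ α) (i₀ : Fin n) :
    (c ^ α) ^ n * ∏ i, y i ^ (-α) ≤ (c / y i₀) ^ α := by
  have hy0 : ∀ i, 0 < y i := fun i => hc.trans_le (hy i)
  have hq0 : ∀ i, 0 ≤ c / y i := fun i => div_nonneg hc.le (hy0 i).le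
  have hle_one : ∀ i, (c / y i) ^ α ≤ 1 :=
    fun i => Real.rpow_le_one (hq0 i) ((div_le_one (hy0 i)).2 (hy i)) hα
  rw [← Fin.prod_const, ← Finset.prod_mul_distrib,
    Finset.prod_congr rfl fun i _ => rpow_mul_rpow_neg hc.le (hy0 i).le α,
    ← Finset.mul_prod_erase _ _ (Finset.mem_univ i₀)]
  exact mul_le_of_le_one_right (Real.rpow_nonneg (hq0 i₀) α)
    (Finset.prod_le_one (fun i _ => Real.rpow_nonneg (hq0 i) α) fun i _ => hle_one i)

lemma integrableOn_rpow_mul_rpow_of_lt_one {r q : ℝ} (hr : -1 < r) (hq0 : 0 < q) (hq1 : q < 1) :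
    IntegrableOn (fun α : ℝ => α ^ r * q ^ α) (Ioi 0) := by
  have h := integrableOn_rpow_mul_exp_neg_mul_rpow hr zero_lt_one
    (neg_pos.2 (Real.log_neg hq0 hq1))
  refine h.congr_fun (fun α hα => ?_) measurableSet_Ioi
  simp only [Real.rpow_one, neg_neg, Real.rpow_def_of_pos hq0]

/-- `∑ₖ (log (k + N))^j (k + N)^(-α)`, which is `(-1)^j` times the `j`-th `α`-derivative of the
Hurwitz zeta function `ζ(α, N)`. -/
noncomputable def hurwitzLogSum (N j : ℕ) (α : ℝ) : ℝ :=
  ∑' k : ℕ, Real.log ((k + N : ℕ) : ℝ) ^ j * ((k + N : ℕ) : ℝ) ^ (-α)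

noncomputable def hurwitzFisherInfo (N : ℕ) (α : ℝ) : ℝ :=
  hurwitzLogSum N 2 α / hurwitzLogSum N 0 α - (-hurwitzLogSum N 1 α / hurwitzLogSum N 0 α) ^ 2

noncomputable def jeffreysIntegrand {n : ℕ} (N : ℕ) (x : Fin n → ℕ) (r α : ℝ) : ℝ :=
  α ^ r * √(hurwitzFisherInfo N α) * (hurwitzLogSum N 0 α ^ n)⁻¹ * ∏ i, (x i : ℝ) ^ (-α)

section HurwitzLogSum

variable {N : ℕ}

lemma one_le_natCast_add (hN : 1 ≤ N) (k : ℕ) : (1 : ℝ) ≤ ((k + N : ℕ) : ℝ) := by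
  exact_mod_cast le_add_left hN

lemma hurwitzLogSum_zero (α : ℝ) :
    hurwitzLogSum N 0 α = ∑' k : ℕ, ((k + N : ℕ) : ℝ) ^ (-α) := by
  simp [hurwitzLogSum]

lemma summable_natCast_add_rpow_neg (N : ℕ) {β : ℝ} (hβ : 1 < β) :
    Summable fun k : ℕ => ((k + N : ℕ) : ℝ) ^ (-β) :=
  (summable_nat_add_iff N).2 (Real.summable_nat_rpow.2 (by linarith))

lemma rpow_neg_le_hurwitzLogSum_zero {β : ℝ} (hβ : 1 < β) :
    (N : ℝ) ^ (-β) ≤ hurwitzLogSum N 0 β := by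
  rw [hurwitzLogSum_zero]
  simpa using (summable_natCast_add_rpow_neg N hβ).le_tsum 0 fun k _ => by positivity

lemma div_sub_one_le_hurwitzLogSum_zero (hN : 1 ≤ N) {β : ℝ} (hβ : 1 < β) :
    (N : ℝ) ^ (1 - β) / (β - 1) ≤ hurwitzLogSum N 0 β := by
  have hN0 : (0 : ℝ) < N := by exact_mod_cast hN
  rw [← integral_Ioi_rpow_neg hN0 hβ, hurwitzLogSum_zero]
  exact (antitoneOn_rpow_neg_Ici hN0 (by linarith)).integral_le_tsum_comp_add N
    (Real.summable_nat_rpow.2 (by linarith)) fun t ht => Real.rpow_nonneg (hN0.trans ht).le _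

lemma hurwitzLogSum_zero_le (hN : 1 ≤ N) {β : ℝ} (hβ : 1 < β) :
    hurwitzLogSum N 0 β ≤ (N : ℝ) ^ (-β) + (N : ℝ) ^ (1 - β) / (β - 1) := by
  have hN0 : (0 : ℝ) < N := by exact_mod_cast hN
  have htail : ∑' k : ℕ, ((k + N + 1 : ℕ) : ℝ) ^ (-β) ≤ (N : ℝ) ^ (1 - β) / (β - 1) := by
    rw [← integral_Ioi_rpow_neg hN0 hβ]
    exact (antitoneOn_rpow_neg_Ici hN0 (by linarith)).tsum_comp_add_le_integral N
      (integrableOn_Ioi_rpow_of_lt (by linarith) hN0)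
      fun t ht => Real.rpow_nonneg (hN0.trans ht).le _
  rw [hurwitzLogSum_zero, (summable_natCast_add_rpow_neg N hβ).tsum_eq_zero_add]
  simp only [zero_add, Nat.add_right_comm _ 1 N]
  exact add_le_add_right htail _

lemma hurwitzLogTerm_le (hN : 1 ≤ N) {ε : ℝ} (hε : 0 < ε) (j : ℕ) (α : ℝ) (k : ℕ) :
    Real.log ((k + N : ℕ) : ℝ) ^ j * ((k + N : ℕ) : ℝ) ^ (-α)
      ≤ ((k + N : ℕ) : ℝ) ^ (-(α - j * ε)) / ε ^ j :=
  log_pow_mul_rpow_neg_le (one_le_natCast_add hN k) hε j α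

lemma hurwitzLogTerm_nonneg (hN : 1 ≤ N) (j : ℕ) (α : ℝ) (k : ℕ) :
    0 ≤ Real.log ((k + N : ℕ) : ℝ) ^ j * ((k + N : ℕ) : ℝ) ^ (-α) :=
  mul_nonneg (pow_nonneg (Real.log_nonneg (one_le_natCast_add hN k)) j) (by positivity)

lemma summable_hurwitzLogTerm_of_lt (hN : 1 ≤ N) {ε : ℝ} (hε : 0 < ε) (j : ℕ) {α : ℝ}
    (h : 1 < α - j * ε) :
    Summable fun k : ℕ => Real.log ((k + N : ℕ) : ℝ) ^ j * ((k + N : ℕ) : ℝ) ^ (-α) :=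
  .of_nonneg_of_le (hurwitzLogTerm_nonneg hN j α) (hurwitzLogTerm_le hN hε j α)
    ((summable_natCast_add_rpow_neg N h).div_const _)

lemma summable_hurwitzLogTerm (hN : 1 ≤ N) (j : ℕ) {α : ℝ} (hα : 1 < α) :
    Summable fun k : ℕ => Real.log ((k + N : ℕ) : ℝ) ^ j * ((k + N : ℕ) : ℝ) ^ (-α) := by
  refine summable_hurwitzLogTerm_of_lt hN (ε := (α - 1) / (2 * (j + 1))) (by positivity) j ?_
  have : j * ((α - 1) / (2 * (j + 1))) < α - 1 := by
    rw [← mul_div_assoc, div_lt_iff₀ (by positivity)]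
    nlinarith
  linarith

lemma hurwitzLogSum_le (hN : 1 ≤ N) {ε : ℝ} (hε : 0 < ε) (j : ℕ) {α : ℝ}
    (h : 1 < α - j * ε) :
    hurwitzLogSum N j α ≤ hurwitzLogSum N 0 (α - j * ε) / ε ^ j := by
  rw [hurwitzLogSum_zero, ← tsum_div_const]
  exact (summable_hurwitzLogTerm_of_lt hN hε j h).tsum_le_tsum (hurwitzLogTerm_le hN hε j α)
    ((summable_natCast_add_rpow_neg N h).div_const _)

lemma hurwitzLogSum_two_le (hN : 1 ≤ N) {α : ℝ} (hα : 1 < α) :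
    hurwitzLogSum N 2 α ≤ 16 * (α + 1) / (α - 1) ^ 3 := by
  have hN1 : (1 : ℝ) ≤ N := by exact_mod_cast hN
  have ht : 0 < α - 1 := by linarith
  have hβ : α - (2 : ℕ) * ((α - 1) / 4) = (α + 1) / 2 := by push_cast; ring
  have hZ := hurwitzLogSum_le hN (ε := (α - 1) / 4) (by positivity) 2 (by rw [hβ]; linarith)
  have hZ0 : hurwitzLogSum N 0 ((α + 1) / 2) ≤ 1 + 1 / ((α + 1) / 2 - 1) := by
    refine (hurwitzLogSum_zero_le hN (by linarith)).trans (add_le_add ?_ ?_)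
    · exact Real.rpow_le_one_of_one_le_of_nonpos hN1 (by linarith)
    · exact div_le_div_of_nonneg_right
        (Real.rpow_le_one_of_one_le_of_nonpos hN1 (by linarith)) (by linarith)
  rw [hβ] at hZ
  calc hurwitzLogSum N 2 α ≤ (1 + 1 / ((α + 1) / 2 - 1)) / ((α - 1) / 4) ^ 2 :=
        hZ.trans (div_le_div_of_nonneg_right hZ0 (by positivity))
    _ = 16 * (α + 1) / (α - 1) ^ 3 := by
        rw [show (α + 1) / 2 - 1 = (α - 1) / 2 by ring]; field_simp; ring

lemma rpow_mul_hurwitzLogSum_antitoneOn (hN : 1 ≤ N) (j : ℕ) :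
    AntitoneOn (fun α => (N : ℝ) ^ α * hurwitzLogSum N j α) (Ioi 1) := by
  intro α hα β hβ hαβ
  have hN0 : (0 : ℝ) < N := by exact_mod_cast hN
  simp only [hurwitzLogSum, ← tsum_mul_left]
  refine ((summable_hurwitzLogTerm hN j hβ).mul_left _).tsum_le_tsum (fun k => ?_)
    ((summable_hurwitzLogTerm hN j hα).mul_left _)
  have ha : (0 : ℝ) < ((k + N : ℕ) : ℝ) := by linarith [one_le_natCast_add hN k]
  rw [mul_left_comm, rpow_mul_rpow_neg hN0.le ha.le, mul_left_comm, rpow_mul_rpow_neg hN0.le ha.le]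
  refine mul_le_mul_of_nonneg_left (Real.rpow_le_rpow_of_exponent_ge (by positivity) ?_ hαβ)
    (pow_nonneg (Real.log_nonneg (one_le_natCast_add hN k)) j)
  rw [div_le_one ha]
  exact_mod_cast Nat.le_add_left N k

lemma hurwitzLogSum_zero_pos (hN : 1 ≤ N) {α : ℝ} (hα : 1 < α) : 0 < hurwitzLogSum N 0 α :=
  (Real.rpow_pos_of_pos (by exact_mod_cast hN) _).trans_le (rpow_neg_le_hurwitzLogSum_zero hα)

lemma inv_hurwitzLogSum_zero_le_rpow (hN : 1 ≤ N) {α : ℝ} (hα : 1 < α) :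
    (hurwitzLogSum N 0 α)⁻¹ ≤ (N : ℝ) ^ α := by
  have hN0 : (0 : ℝ) < N := by exact_mod_cast hN
  simpa only [Real.rpow_neg hN0.le, inv_inv] using
    inv_anti₀ (by positivity) (rpow_neg_le_hurwitzLogSum_zero (N := N) hα)

lemma inv_hurwitzLogSum_zero_le (hN : 1 ≤ N) {α : ℝ} (hα : 1 < α) (hα2 : α ≤ 2) :
    (hurwitzLogSum N 0 α)⁻¹ ≤ N * (α - 1) := by
  have hN1 : (1 : ℝ) ≤ N := by exact_mod_cast hN
  have hN0 : (0 : ℝ) < N := by linarith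
  have ht : 0 < α - 1 := by linarith
  rw [← inv_inv ((N : ℝ) * (α - 1))]
  refine inv_anti₀ (by positivity) ((?_ : _ ≤ _).trans (div_sub_one_le_hurwitzLogSum_zero hN hα))
  rw [mul_inv, ← div_eq_mul_inv, ← Real.rpow_neg_one]
  exact div_le_div_of_nonneg_right (Real.rpow_le_rpow_of_exponent_le hN1 (by linarith)) ht.le

lemma hurwitzFisherInfo_le_div (N : ℕ) (α : ℝ) :
    hurwitzFisherInfo N α ≤ hurwitzLogSum N 2 α * (hurwitzLogSum N 0 α)⁻¹ :=
  (sub_le_self _ (sq_nonneg _)).trans_eq (div_eq_mul_inv _ _)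

lemma hurwitzFisherInfo_le_of_le_two (hN : 1 ≤ N) {α : ℝ} (hα : 1 < α) (hα2 : α ≤ 2) :
    hurwitzFisherInfo N α ≤ 48 * N / (α - 1) ^ 2 := by
  have ht : 0 < α - 1 := by linarith
  calc hurwitzFisherInfo N α ≤ 16 * (α + 1) / (α - 1) ^ 3 * (N * (α - 1)) :=
        (hurwitzFisherInfo_le_div N α).trans (mul_le_mul (hurwitzLogSum_two_le hN hα)
          (inv_hurwitzLogSum_zero_le hN hα hα2) (inv_nonneg.2 (hurwitzLogSum_zero_pos hN hα).le)
          (by positivity))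
    _ = 16 * (α + 1) * N / (α - 1) ^ 2 := by field_simp
    _ ≤ 48 * N / (α - 1) ^ 2 := by gcongr; linarith

lemma hurwitzFisherInfo_le_of_two_le (hN : 1 ≤ N) {α : ℝ} (hα : 2 ≤ α) :
    hurwitzFisherInfo N α ≤ (N : ℝ) ^ (2 : ℝ) * hurwitzLogSum N 2 2 := by
  have hα1 : 1 < α := by linarith
  have hZ2 : 0 ≤ hurwitzLogSum N 2 α := tsum_nonneg (hurwitzLogTerm_nonneg hN 2 α)
  calc hurwitzFisherInfo N α ≤ hurwitzLogSum N 2 α * (N : ℝ) ^ α :=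
        (hurwitzFisherInfo_le_div N α).trans
          (mul_le_mul_of_nonneg_left (inv_hurwitzLogSum_zero_le_rpow hN hα1) hZ2)
    _ = (N : ℝ) ^ α * hurwitzLogSum N 2 α := mul_comm _ _
    _ ≤ (N : ℝ) ^ (2 : ℝ) * hurwitzLogSum N 2 2 :=
        rpow_mul_hurwitzLogSum_antitoneOn hN 2 (by norm_num : (2 : ℝ) ∈ Ioi 1) hα1 hα

lemma aemeasurable_hurwitzLogSum (hN : 1 ≤ N) (j : ℕ) :
    AEMeasurable (hurwitzLogSum N j) (volume.restrict (Ioi 1)) := by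
  refine aemeasurable_of_tendsto_metrizable_ae atTop (f := fun m α => ∑ k ∈ Finset.range m,
    Real.log ((k + N : ℕ) : ℝ) ^ j * ((k + N : ℕ) : ℝ) ^ (-α)) (fun m => ?_) ?_
  · exact (Finset.measurable_sum _ fun k _ => by fun_prop).aemeasurable
  · rw [ae_restrict_iff' measurableSet_Ioi]
    exact .of_forall fun α hα => (summable_hurwitzLogTerm hN j hα).hasSum.tendsto_sum_nat

end HurwitzLogSum

section JeffreysIntegrand

variable {n N : ℕ} {x : Fin n → ℕ} {r α : ℝ}

lemma jeffreysIntegrand_nonneg (hα : 0 ≤ α) : 0 ≤ jeffreysIntegrand N x r α := by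
  have hZ : 0 ≤ hurwitzLogSum N 0 α := by
    rw [hurwitzLogSum_zero]; exact tsum_nonneg fun k => by positivity
  unfold jeffreysIntegrand
  positivity

lemma jeffreysIntegrand_le_of_le_two (hN : 1 ≤ N) (hn : n ≠ 0) (hx : ∀ i, 1 ≤ x i)
    (hr : 0 ≤ r) (hα : 1 < α) (hα2 : α ≤ 2) :
    jeffreysIntegrand N x r α ≤ 2 ^ r * √(48 * N) * (N : ℝ) ^ n := by
  have ht : 0 < α - 1 := by linarith
  have hZ := hurwitzLogSum_zero_pos hN hα
  have hpow : α ^ r ≤ 2 ^ r := Real.rpow_le_rpow (by linarith) hα2 hr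
  have hsqrt : √(hurwitzFisherInfo N α) ≤ √(48 * N) / (α - 1) := by
    rw [← Real.sqrt_sq ht.le, ← Real.sqrt_div' _ (sq_nonneg _)]
    exact Real.sqrt_le_sqrt (hurwitzFisherInfo_le_of_le_two hN hα hα2)
  have hinv : (hurwitzLogSum N 0 α ^ n)⁻¹ ≤ (N : ℝ) ^ n * (α - 1) := by
    rw [← inv_pow]
    calc (hurwitzLogSum N 0 α)⁻¹ ^ n ≤ (N * (α - 1)) ^ n :=
          pow_le_pow_left₀ (inv_nonneg.2 hZ.le) (inv_hurwitzLogSum_zero_le hN hα hα2) n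
      _ ≤ (N : ℝ) ^ n * (α - 1) := by
          rw [mul_pow]
          exact mul_le_mul_of_nonneg_left (pow_le_of_le_one ht.le (by linarith) hn)
            (by positivity)
  have hprod : ∏ i, (x i : ℝ) ^ (-α) ≤ 1 :=
    Finset.prod_le_one (fun i _ => by positivity) fun i _ =>
      Real.rpow_le_one_of_one_le_of_nonpos (by exact_mod_cast hx i) (by linarith)
  calc jeffreysIntegrand N x r α
      ≤ 2 ^ r * (√(48 * N) / (α - 1)) * ((N : ℝ) ^ n * (α - 1)) * 1 := by
        unfold jeffreysIntegrand; gcongr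
    _ = 2 ^ r * √(48 * N) * (N : ℝ) ^ n := by field_simp

lemma jeffreysIntegrand_le_of_two_le (hN : 1 ≤ N) (hx : ∀ i, N ≤ x i) (i₀ : Fin n)
    (hα : 2 ≤ α) :
    jeffreysIntegrand N x r α
      ≤ √((N : ℝ) ^ (2 : ℝ) * hurwitzLogSum N 2 2) * (α ^ r * ((N : ℝ) / x i₀) ^ α) := by
  have hN0 : (0 : ℝ) < N := by exact_mod_cast hN
  have hα1 : 1 < α := by linarith
  have hZ := hurwitzLogSum_zero_pos hN hα1
  have hsqrt := Real.sqrt_le_sqrt (hurwitzFisherInfo_le_of_two_le hN hα)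
  have hinv : (hurwitzLogSum N 0 α ^ n)⁻¹ ≤ ((N : ℝ) ^ α) ^ n := by
    rw [← inv_pow]
    exact pow_le_pow_left₀ (inv_nonneg.2 hZ.le) (inv_hurwitzLogSum_zero_le_rpow hN hα1) n
  have hprod := pow_rpow_mul_prod_rpow_neg_le (α := α) (y := fun i => (x i : ℝ)) hN0
    (fun i => by exact_mod_cast hx i) (by linarith) i₀
  calc jeffreysIntegrand N x r α
      ≤ α ^ r * √((N : ℝ) ^ (2 : ℝ) * hurwitzLogSum N 2 2) * ((N : ℝ) ^ α) ^ n
          * ∏ i, (x i : ℝ) ^ (-α) := by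
        unfold jeffreysIntegrand; gcongr
    _ ≤ α ^ r * √((N : ℝ) ^ (2 : ℝ) * hurwitzLogSum N 2 2) * ((N : ℝ) / x i₀) ^ α := by
        rw [mul_assoc]; gcongr
    _ = √((N : ℝ) ^ (2 : ℝ) * hurwitzLogSum N 2 2) * (α ^ r * ((N : ℝ) / x i₀) ^ α) := by ring

lemma aestronglyMeasurable_jeffreysIntegrand (hN : 1 ≤ N) (x : Fin n → ℕ) (r : ℝ) :
    AEStronglyMeasurable (jeffreysIntegrand N x r) (volume.restrict (Ioi 1)) := by
  have h0 := aemeasurable_hurwitzLogSum hN 0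
  have h1 := aemeasurable_hurwitzLogSum hN 1
  have h2 := aemeasurable_hurwitzLogSum hN 2
  unfold jeffreysIntegrand hurwitzFisherInfo
  fun_prop

lemma integrableOn_Ioc_one_two_jeffreysIntegrand (hN : 1 ≤ N) (hn : n ≠ 0)
    (hx : ∀ i, 1 ≤ x i) (hr : 0 ≤ r) :
    IntegrableOn (jeffreysIntegrand N x r) (Ioc 1 2) := by
  refine .of_bound measure_Ioc_lt_top
    ((aestronglyMeasurable_jeffreysIntegrand hN x r).mono_measure
      (Measure.restrict_mono Ioc_subset_Ioi_self le_rfl))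
    (2 ^ r * √(48 * N) * (N : ℝ) ^ n) ?_
  rw [ae_restrict_iff' measurableSet_Ioc]
  refine .of_forall fun α ⟨hα, hα2⟩ => ?_
  rw [Real.norm_of_nonneg (jeffreysIntegrand_nonneg (by linarith))]
  exact jeffreysIntegrand_le_of_le_two hN hn hx hr hα hα2

lemma integrableOn_Ioi_two_jeffreysIntegrand (hN : 1 ≤ N)
    (hx : ∀ i, N ≤ x i) (hx' : ∃ i, N < x i) (hr : -1 < r) :
    IntegrableOn (jeffreysIntegrand N x r) (Ioi 2) := by
  obtain ⟨i₀, hi₀⟩ := hx'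
  have hN0 : (0 : ℝ) < N := by exact_mod_cast hN
  have hi₀' : (N : ℝ) < x i₀ := by exact_mod_cast hi₀
  have hq0 : (0 : ℝ) < N / x i₀ := div_pos hN0 (hN0.trans hi₀')
  have hq1 : (N : ℝ) / x i₀ < 1 := (div_lt_one (hN0.trans hi₀')).2 hi₀'
  have hg := ((integrableOn_rpow_mul_rpow_of_lt_one hr hq0 hq1).mono_set
    (Ioi_subset_Ioi zero_le_two)).const_mul √((N : ℝ) ^ (2 : ℝ) * hurwitzLogSum N 2 2)
  refine hg.mono' ((aestronglyMeasurable_jeffreysIntegrand hN x r).mono_measure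
    (Measure.restrict_mono (Ioi_subset_Ioi one_le_two) le_rfl)) ?_
  rw [ae_restrict_iff' measurableSet_Ioi]
  refine .of_forall fun α hα => ?_
  rw [Real.norm_of_nonneg (jeffreysIntegrand_nonneg (by linarith [mem_Ioi.1 hα]))]
  exact jeffreysIntegrand_le_of_two_le hN hx i₀ (le_of_lt hα)

end JeffreysIntegrand

/-- For fixed integer `x_min ≥ 1` and integer data `x_1,…,x_n` with each `x_i ≥ x_min` and at
least one `x_i > x_min`, for every `r ≥ 0` the integral
`∫_1^∞ α^r √(φ''(α,x_min)) ζ(α,x_min)^{-n} ∏ x_i^{-α} dα` is finite, where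
`φ''(α,x_min) = ζ''(α,x_min)/ζ(α,x_min) - (ζ'(α,x_min)/ζ(α,x_min))^2` with the
termwise-differentiated Hurwitz zeta series `ζ(α,x_min) = ∑_{k=0}^∞ (k + x_min)^{-α}`. -/
theorem stmt7 (x_min : ℕ) (hxm : 1 ≤ x_min) (n : ℕ) (x : Fin n → ℕ)
    (hx : ∀ i, x_min ≤ x i) (hx' : ∃ i, x_min < x i) (r : ℝ) (hr : 0 ≤ r) :
    MeasureTheory.IntegrableOn
      (fun α : ℝ => α ^ r
        * Real.sqrt
            ((∑' k : ℕ, (Real.log ((k + x_min : ℕ) : ℝ)) ^ 2 * ((k + x_min : ℕ) : ℝ) ^ (-α))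
                / (∑' k : ℕ, ((k + x_min : ℕ) : ℝ) ^ (-α))
              - ((-∑' k : ℕ, Real.log ((k + x_min : ℕ) : ℝ) * ((k + x_min : ℕ) : ℝ) ^ (-α))
                  / (∑' k : ℕ, ((k + x_min : ℕ) : ℝ) ^ (-α))) ^ 2)
        * ((∑' k : ℕ, ((k + x_min : ℕ) : ℝ) ^ (-α)) ^ n)⁻¹ * ∏ i, (x i : ℝ) ^ (-α))
      (Set.Ioi 1) := by
  have hn : n ≠ 0 := by
    rintro rfl
    exact hx'.elim fun i _ => i.elim0
  have h : IntegrableOn (jeffreysIntegrand x_min x r) (Ioi 1) := by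
    rw [← Ioc_union_Ioi_eq_Ioi one_le_two]
    exact (integrableOn_Ioc_one_two_jeffreysIntegrand hxm hn (fun i => hxm.trans (hx i)) hr).union
      (integrableOn_Ioi_two_jeffreysIntegrand hxm hx hx' (by linarith))
  convert h using 2 with α
  simp only [jeffreysIntegrand, hurwitzFisherInfo, hurwitzLogSum, pow_zero, one_mul, pow_one]
end
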